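/- With the regions B_k, W_k, G_k defined for a graphon w with Γ(w)>0, α = Γ(w)^{2/7}, and an integer m≥1, and with R_k = B_k ∩ W_{k+1} for k = 0,…,m: the sets R_0,…,R_m are pairwise disjoint, and Δ ∖ (⋃_{k=1}^{m} G_k) = ⋃_{k=0}^{m} R_k. -/

import Mathlib

open MeasureTheory Set

/-- `Γ(w, A)`. -/
noncomputable def gammaA (w : ℝ → ℝ → ℝ) (A : Set ℝ) : ℝ :=
  ∫ y in Icc (0:ℝ) 1, ∫ z in Icc (0:ℝ) 1,
    if y < z then
      max (∫ x in A ∩ Icc 0 y, (w x z - w x y)) 0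
        + max (∫ x in A ∩ Icc z 1, (w x y - w x z)) 0
    else 0

/-- `Γ(w) = sup { Γ(w,A) : A ⊆ [0,1] measurable }`. -/
noncomputable def Gamma (w : ℝ → ℝ → ℝ) : ℝ :=
  sSup {r : ℝ | ∃ A : Set ℝ, MeasurableSet A ∧ A ⊆ Icc 0 1 ∧ r = gammaA w A}

/-- A graphon: symmetric, measurable, `[0,1]`-valued on `[0,1]²`. -/
def IsGraphon (w : ℝ → ℝ → ℝ) : Prop :=
  Measurable (Function.uncurry w) ∧ (∀ x y, w x y = w y x) ∧
    ∀ x y : ℝ, x ∈ Icc (0:ℝ) 1 → y ∈ Icc (0:ℝ) 1 → w x y ∈ Icc (0:ℝ) 1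

/-- The average value `w̄(S,T)` of `w` over `S × T`. -/
noncomputable def avgOn (w : ℝ → ℝ → ℝ) (S T : Set ℝ) : ℝ :=
  (∫ x in S, ∫ y in T, w x y) / ((volume S).toReal * (volume T).toReal)

/-- The region `Δ = {(x,y) ∈ [0,1]² : x ≤ y}` above the diagonal. -/
def Delta : Set (ℝ × ℝ) := {p | 0 ≤ p.1 ∧ p.1 ≤ p.2 ∧ p.2 ≤ 1}

/-- The upper-left region `UL(x,y) = [0,x] × [y,1]`. -/
def UL (x y : ℝ) : Set (ℝ × ℝ) := Icc 0 x ×ˢ Icc y 1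

/-- The lower-right region `LR(x,y) = ([x,y] × [x,y]) ∩ Δ`. -/
def LR (x y : ℝ) : Set (ℝ × ℝ) := (Icc x y ×ˢ Icc x y) ∩ Delta

/-- The `k`-th black region `B_k` (for `0 ≤ k ≤ m+1`), with `B_0 = Δ` and `B_{m+1} = ∅`. -/
noncomputable def regionB (w : ℝ → ℝ → ℝ) (α : ℝ) (m k : ℕ) : Set (ℝ × ℝ) :=
  if k = 0 then Delta
  else if k = m + 1 then ∅
  else {p | p ∈ Delta ∧ (p.1 = p.2 ∨ ∃ S T : Set ℝ, MeasurableSet S ∧ MeasurableSet T ∧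
    S ×ˢ T ⊆ UL p.1 p.2 ∧ (volume S).toReal = α ∧ (volume T).toReal = α ∧
    ((k : ℝ) - 1) / m < avgOn w S T)}

/-- The `k`-th white region `W_k` (for `0 ≤ k ≤ m+1`), with `W_0 = ∅` and `W_{m+1} = Δ`. -/
noncomputable def regionW (w : ℝ → ℝ → ℝ) (α : ℝ) (m k : ℕ) : Set (ℝ × ℝ) :=
  if k = 0 then ∅
  else if k = m + 1 then Delta
  else {p | p ∈ Delta \ regionB w α m k ∧ ∃ S T : Set ℝ, MeasurableSet S ∧ MeasurableSet T ∧
    S ×ˢ T ⊆ LR p.1 p.2 ∧ (volume S).toReal = α ∧ (volume T).toReal = α ∧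
    avgOn w S T ≤ ((k : ℝ) - 1) / m}

/-- The `k`-th grey region `G_k = Δ ∖ (B_k ∪ W_k)`. -/
noncomputable def regionG (w : ℝ → ℝ → ℝ) (α : ℝ) (m k : ℕ) : Set (ℝ × ℝ) :=
  Delta \ (regionB w α m k ∪ regionW w α m k)

/-- `R_k = B_k ∩ W_{k+1}`. -/
noncomputable def regionR (w : ℝ → ℝ → ℝ) (α : ℝ) (m k : ℕ) : Set (ℝ × ℝ) :=
  regionB w α m k ∩ regionW w α m (k + 1)

/-!
Only the order of the thresholds `(k - 1) / m` matters: for `1 ≤ a ≤ b ≤ m` one has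
`B_b ⊆ B_a` and `W_a ⊆ W_b`, while `W_k ∩ B_k = ∅`. A point of `Δ` outside every grey region
then lies in `R_k` for the last `k` with the point in `B_k`; conversely a point of `R_k` is in
`B_j` for `j ≤ k` and in `W_j` for `j > k`, so it is in no `G_j`.
-/

section Staircase

variable {α : Type*} {D : Set α} {B W : ℕ → Set α} {n : ℕ}

theorem disjoint_inter_succ_of_lt (hB : AntitoneOn B (Icc 1 n))
    (hWB : ∀ k ∈ Icc 1 n, Disjoint (W k) (B k)) {i j : ℕ} (hij : i < j) (hj : j ≤ n) :
    Disjoint (B i ∩ W (i + 1)) (B j ∩ W (j + 1)) := by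
  have hi : i + 1 ∈ Icc 1 n := ⟨by omega, by omega⟩
  have hBj : B j ⊆ B (i + 1) := hB hi ⟨by omega, hj⟩ hij
  exact ((hWB (i + 1) hi).mono_right hBj).mono inter_subset_right inter_subset_left

theorem exists_mem_inter_succ {p : α} (h0 : p ∈ B 0) (hn : p ∈ W (n + 1))
    (h : ∀ k ∈ Icc 1 n, p ∈ B k ∪ W k) : ∃ k ≤ n, p ∈ B k ∩ W (k + 1) := by
  classical
  set k := Nat.findGreatest (p ∈ B ·) n
  have hkn : k ≤ n := Nat.findGreatest_le n
  refine ⟨k, hkn, Nat.findGreatest_spec (P := (p ∈ B ·)) (Nat.zero_le n) h0, ?_⟩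
  rcases hkn.eq_or_lt with hk | hk
  · rwa [hk]
  · exact (h (k + 1) ⟨by omega, hk⟩).resolve_left
      (Nat.findGreatest_is_greatest (Nat.lt_succ_self k) hk)

theorem mem_union_of_mem_inter_succ (hB : AntitoneOn B (Icc 1 n))
    (hW : MonotoneOn W (Icc 1 n)) {p : α} {k j : ℕ} (hk : k ≤ n) (hj : j ∈ Icc 1 n)
    (hp : p ∈ B k ∩ W (k + 1)) : p ∈ B j ∪ W j := by
  obtain ⟨hj1, hjn⟩ := hj
  rcases le_or_gt j k with hjk | hkj
  · exact Or.inl (hB ⟨hj1, hjn⟩ ⟨hj1.trans hjk, hk⟩ hjk hp.1)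
  · exact Or.inr (hW ⟨by omega, by omega⟩ ⟨hj1, hjn⟩ hkj hp.2)

theorem diff_biUnion_diff_union_eq_biUnion_inter_succ (hB0 : D ⊆ B 0) (hWn : D ⊆ W (n + 1))
    (hBD : ∀ k ≤ n, B k ⊆ D) (hB : AntitoneOn B (Icc 1 n)) (hW : MonotoneOn W (Icc 1 n)) :
    D \ ⋃ k ∈ Finset.Icc 1 n, D \ (B k ∪ W k) = ⋃ k ∈ Finset.Icc 0 n, B k ∩ W (k + 1) := by
  ext p
  simp only [mem_sdiff, mem_iUnion, Finset.mem_Icc, exists_prop, not_exists, not_and,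
    not_not, zero_le, true_and]
  constructor
  · rintro ⟨hpD, hcover⟩
    exact exists_mem_inter_succ (hB0 hpD) (hWn hpD) fun k hk => hcover k hk hpD
  · rintro ⟨k, hk, hp⟩
    exact ⟨hBD k hk hp.1, fun j hj _ => mem_union_of_mem_inter_succ hB hW hk hj hp⟩

end Staircase

section Regions

variable (w : ℝ → ℝ → ℝ) (α : ℝ)

def HasDenseUL (p : ℝ × ℝ) (t : ℝ) : Prop :=
  ∃ S T : Set ℝ, MeasurableSet S ∧ MeasurableSet T ∧ S ×ˢ T ⊆ UL p.1 p.2 ∧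
    (volume S).toReal = α ∧ (volume T).toReal = α ∧ t < avgOn w S T

def HasSparseLR (p : ℝ × ℝ) (t : ℝ) : Prop :=
  ∃ S T : Set ℝ, MeasurableSet S ∧ MeasurableSet T ∧ S ×ˢ T ⊆ LR p.1 p.2 ∧
    (volume S).toReal = α ∧ (volume T).toReal = α ∧ avgOn w S T ≤ t

variable {w α}

theorem HasDenseUL.anti {p : ℝ × ℝ} {s t : ℝ} (hst : s ≤ t) (h : HasDenseUL w α p t) :
    HasDenseUL w α p s := by
  obtain ⟨S, T, hS, hT, hST, hvS, hvT, havg⟩ := h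
  exact ⟨S, T, hS, hT, hST, hvS, hvT, hst.trans_lt havg⟩

theorem HasSparseLR.mono {p : ℝ × ℝ} {s t : ℝ} (hst : s ≤ t) (h : HasSparseLR w α p s) :
    HasSparseLR w α p t := by
  obtain ⟨S, T, hS, hT, hST, hvS, hvT, havg⟩ := h
  exact ⟨S, T, hS, hT, hST, hvS, hvT, havg.trans hst⟩

variable {m : ℕ}

theorem threshold_mono {a b : ℕ} (hab : a ≤ b) : ((a : ℝ) - 1) / m ≤ ((b : ℝ) - 1) / m :=
  div_le_div_of_nonneg_right (by simpa using hab) m.cast_nonneg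

theorem regionB_of_mem_Icc {k : ℕ} (hk : k ∈ Icc 1 m) :
    regionB w α m k = {p | p ∈ Delta ∧ (p.1 = p.2 ∨ HasDenseUL w α p (((k : ℝ) - 1) / m))} := by
  obtain ⟨hk1, hkm⟩ := hk
  rw [regionB, if_neg (by omega), if_neg (by omega)]
  rfl

theorem regionW_of_mem_Icc {k : ℕ} (hk : k ∈ Icc 1 m) :
    regionW w α m k =
      {p | p ∈ Delta \ regionB w α m k ∧ HasSparseLR w α p (((k : ℝ) - 1) / m)} := by
  obtain ⟨hk1, hkm⟩ := hk
  rw [regionW, if_neg (by omega), if_neg (by omega)]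
  rfl

theorem regionB_subset_Delta (k : ℕ) : regionB w α m k ⊆ Delta := by
  unfold regionB
  split_ifs
  exacts [subset_rfl, empty_subset _, fun _ hp => hp.1]

theorem disjoint_regionW_regionB (k : ℕ) : Disjoint (regionW w α m k) (regionB w α m k) := by
  unfold regionW
  split_ifs with h0 h1
  · exact disjoint_bot_left
  · simp [h1, regionB]
  · exact disjoint_left.2 fun _ hp => hp.1.2

theorem regionB_antitoneOn : AntitoneOn (regionB w α m) (Icc 1 m) := by
  intro a ha b hb hab
  rw [regionB_of_mem_Icc ha, regionB_of_mem_Icc hb]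
  exact fun p ⟨hpD, hp⟩ => ⟨hpD, hp.imp_right (HasDenseUL.anti (threshold_mono hab))⟩

theorem regionW_monotoneOn : MonotoneOn (regionW w α m) (Icc 1 m) := by
  intro a ha b hb hab
  rw [regionW_of_mem_Icc ha, regionW_of_mem_Icc hb]
  exact fun p ⟨⟨hpD, hpa⟩, hp⟩ =>
    ⟨⟨hpD, fun hpb => hpa (regionB_antitoneOn ha hb hab hpb)⟩,
      hp.mono (threshold_mono hab)⟩

end Regions

theorem regionR_partition_general (w : ℝ → ℝ → ℝ) (α : ℝ) (m : ℕ) :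
    (∀ i j : ℕ, i ≤ m → j ≤ m → i ≠ j →
      regionR w α m i ∩ regionR w α m j = ∅) ∧
      Delta \ (⋃ k ∈ Finset.Icc 1 m, regionG w α m k) =
        ⋃ k ∈ Finset.Icc 0 m, regionR w α m k := by
  have hWB : ∀ k ∈ Icc 1 m, Disjoint (regionW w α m k) (regionB w α m k) :=
    fun k _ => disjoint_regionW_regionB k
  refine ⟨fun i j hi hj hij => ?_, ?_⟩
  · rw [← disjoint_iff_inter_eq_empty]
    rcases hij.lt_or_gt with hij | hji
    · exact disjoint_inter_succ_of_lt regionB_antitoneOn hWB hij hj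
    · exact (disjoint_inter_succ_of_lt regionB_antitoneOn hWB hji hi).symm
  · have hB0 : regionB w α m 0 = Delta := if_pos rfl
    have hWm : regionW w α m (m + 1) = Delta := by simp [regionW]
    exact diff_biUnion_diff_union_eq_biUnion_inter_succ hB0.ge hWm.ge
      (fun k _ => regionB_subset_Delta k) regionB_antitoneOn regionW_monotoneOn

/-- The regions `R_0, …, R_m` are pairwise disjoint, and
`Δ ∖ (⋃_{k=1}^m G_k) = ⋃_{k=0}^m R_k`. -/
theorem regionR_partition (w : ℝ → ℝ → ℝ) (hw : IsGraphon w) (hΓ : 0 < Gamma w)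
    (α : ℝ) (hα : α = Gamma w ^ ((2:ℝ)/7)) (m : ℕ) (hm : 1 ≤ m) :
    (∀ i j : ℕ, i ≤ m → j ≤ m → i ≠ j →
      regionR w α m i ∩ regionR w α m j = ∅) ∧
      Delta \ (⋃ k ∈ Finset.Icc 1 m, regionG w α m k) =
        ⋃ k ∈ Finset.Icc 0 m, regionR w α m k :=
  regionR_partition_general w α m
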